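/- arXiv:1008.1201 — 4 statements merged into one kernel-verified Lean document; each statement's English description precedes it below -/
import Mathlib

section
/- Let σ₁ ≥ σ₂ ≥ … ≥ σ_r > 0 and let D = diag(√σ₁, …, √σ_r). For every r×r Hermitian matrix H with ‖H‖₂ ≤ 1 and every i with 1 ≤ i ≤ r, the i-th largest singular value of DHD satisfies σ_i(DHD) ≤ min_{1 ≤ j ≤ i} √(σ_j σ_{i−j+1}). -/
open Matrix Finset

/-- Spectral norm (largest singular value / L2 operator norm) of a complex matrix. -/
noncomputable def specNorm {m n : ℕ} (M : Matrix (Fin m) (Fin n) ℂ) : ℝ :=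
  ‖LinearMap.toContinuousLinearMap (Matrix.toEuclideanLin M)‖

/-- The `i`-th largest singular value of a square complex matrix (`i = 0` is the largest). -/
noncomputable def sval {n : ℕ} (M : Matrix (Fin n) (Fin n) ℂ) (i : Fin n) : ℝ :=
  Real.sqrt ((Matrix.isHermitian_conjTranspose_mul_self M).eigenvalues
    (Tuple.sort (Matrix.isHermitian_conjTranspose_mul_self M).eigenvalues i.rev))

/-- `i - j` in `Fin r` (0-based counterpart of the index `i - j + 1`). -/
def isub {r : ℕ} (i j : Fin r) : Fin r :=
  ⟨i.val - j.val, lt_of_le_of_lt (Nat.sub_le _ _) i.isLt⟩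

/-- `min_{1 ≤ j ≤ i} √(σ_j σ_{i-j+1})`, written 0-based. -/
noncomputable def pairMin {r : ℕ} (σ : Fin r → ℝ) (i : Fin r) : ℝ :=
  (Finset.Iic i).inf' ⟨i, Finset.mem_Iic.mpr le_rfl⟩
    (fun j => Real.sqrt (σ j * σ (isub i j)))

/-! The upper half of the min–max principle: if `‖M x‖ ≤ c ‖x‖` on a subspace of codimension at
most `i`, then `σ_i(M) ≤ c`, for otherwise the subspace would meet the span of the eigenvectors of
`Mᴴ M` with eigenvalue `> c²`, which has dimension `> i`. Given `j ≤ i` (0-based), take the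
subspace of those `x` whose first `i - j` coordinates vanish and such that the first `j`
coordinates of `H D x` vanish. On it, `D` shrinks `x` by `√σ_{i-j}` and `H D x` by `√σ_j`, and
`H` is a contraction. -/

theorem Tuple.sort_apply_le_of_lt_card {α : Type*} [LinearOrder α] {n : ℕ} (f : Fin n → α)
    {c : α} (j : Fin n) (h : j.val < Fintype.card {k // f k ≤ c}) :
    f (Tuple.sort f j) ≤ c := by
  by_contra! hlt
  refine h.not_ge ?_
  calc Fintype.card {k // f k ≤ c}
      = Fintype.card {k // f (Tuple.sort f k) ≤ c} :=
        (Fintype.card_congr ((Tuple.sort f).subtypeEquiv fun _ => Iff.rfl)).symm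
    _ ≤ Fintype.card {k // k < j} := Fintype.card_subtype_mono _ _ fun k hk =>
        lt_of_not_ge fun hjk => (hlt.trans_le (Tuple.monotone_sort f hjk)).not_ge hk
    _ = j := by rw [Fintype.card_subtype, Finset.filter_gt_eq_Iio, Fin.card_Iio]

theorem Real.sqrt_mul_sqrt_le (x y : ℝ) : √x * √y ≤ √(x * y) := by
  rcases le_or_gt 0 x with hx | hx
  · rw [Real.sqrt_mul hx]
  · rw [Real.sqrt_eq_zero_of_nonpos hx.le, zero_mul]
    exact Real.sqrt_nonneg _

theorem Module.finrank_le_finrank_ker_inf_ker_add {K E F G : Type*} [DivisionRing K]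
    [AddCommGroup E] [Module K E] [AddCommGroup F] [Module K F] [AddCommGroup G] [Module K G]
    [FiniteDimensional K E] [FiniteDimensional K F] [FiniteDimensional K G]
    (f : E →ₗ[K] F) (g : E →ₗ[K] G) :
    finrank K E ≤ finrank K ↥(LinearMap.ker f ⊓ LinearMap.ker g) + finrank K F + finrank K G := by
  have hrank := (f.prod g).finrank_range_add_finrank_ker
  have hrange := Submodule.finrank_le (LinearMap.range (f.prod g))
  rw [LinearMap.ker_prod] at hrank
  rw [Module.finrank_prod] at hrange
  omega

namespace OrthonormalBasis

open RCLike

variable {𝕜 E ι : Type*} [RCLike 𝕜] [NormedAddCommGroup E] [InnerProductSpace 𝕜 E] [Fintype ι]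
  {T : E →ₗ[𝕜] E} (b : OrthonormalBasis ι 𝕜 E) {μ : ι → ℝ}

theorem re_inner_apply_self_eq_sum (hT : T.IsSymmetric) (hb : ∀ k, T (b k) = (μ k : 𝕜) • b k)
    (x : E) :
    re (inner 𝕜 (T x) x) = ∑ k, μ k * ‖inner 𝕜 (b k) x‖ ^ 2 := by
  rw [← b.sum_inner_mul_inner, map_sum]
  refine Finset.sum_congr rfl fun k _ => ?_
  rw [hT, hb, inner_smul_right, ← inner_conj_symm x, mul_assoc, RCLike.conj_mul]
  norm_cast

/-- The coordinates along the eigenvectors with eigenvalue `≤ c` are injective on `V`: a nonzero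
vector without such coordinates has `re ⟪T x, x⟫ > c ‖x‖²`. -/
theorem finrank_le_card_of_re_inner_le (hT : T.IsSymmetric)
    (hb : ∀ k, T (b k) = (μ k : 𝕜) • b k) {c : ℝ} {V : Submodule 𝕜 E}
    (hV : ∀ x ∈ V, re (inner 𝕜 (T x) x) ≤ c * ‖x‖ ^ 2) :
    Module.finrank 𝕜 V ≤ Fintype.card {k // μ k ≤ c} := by
  let φ : V →ₗ[𝕜] ({k // μ k ≤ c} → 𝕜) :=
    LinearMap.pi (fun k => innerₛₗ 𝕜 (b k)) ∘ₗ V.subtype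
  have hφ : Function.Injective φ := by
    rw [← LinearMap.ker_eq_bot, Submodule.eq_bot_iff]
    rintro ⟨x, hxV⟩ hx
    by_contra hx0
    have hlow : ∀ k, μ k ≤ c → inner 𝕜 (b k) x = 0 := fun k hk => congr_fun hx ⟨k, hk⟩
    obtain ⟨k, hk⟩ : ∃ k, inner 𝕜 (b k) x ≠ 0 := by
      by_contra! h
      exact hx0 (Subtype.ext (b.repr.injective (by ext k; simpa [b.repr_apply_apply] using h k)))
    have hμk : c < μ k := lt_of_not_ge fun h => hk (hlow k h)
    refine (hV x hxV).not_gt ?_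
    rw [b.re_inner_apply_self_eq_sum hT hb, ← b.sum_sq_norm_inner_right, Finset.mul_sum]
    refine Finset.sum_lt_sum (fun l _ => ?_) ⟨k, Finset.mem_univ _, ?_⟩
    · rcases le_or_gt (μ l) c with hl | hl
      · simp [hlow l hl]
      · exact mul_le_mul_of_nonneg_right hl.le (sq_nonneg _)
    · exact mul_lt_mul_of_pos_right hμk (by positivity)
  simpa using LinearMap.finrank_le_finrank_of_injective hφ

end OrthonormalBasis

theorem Matrix.re_inner_toEuclideanLin_conjTranspose_mul_self {𝕜 m n : Type*} [RCLike 𝕜]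
    [Fintype m] [Fintype n] [DecidableEq m] [DecidableEq n] (M : Matrix m n 𝕜)
    (x : EuclideanSpace 𝕜 n) :
    RCLike.re (inner 𝕜 (toEuclideanLin (Mᴴ * M) x) x) = ‖toEuclideanLin M x‖ ^ 2 := by
  rw [toLpLin_mul _ 2, LinearMap.comp_apply, toEuclideanLin_conjTranspose_eq_adjoint,
    LinearMap.adjoint_inner_left, inner_self_eq_norm_sq]

theorem Matrix.norm_toEuclideanLin_diagonal_le {𝕜 n : Type*} [RCLike 𝕜] [Fintype n]
    [DecidableEq n] (d : n → 𝕜) {t : ℝ} (ht : 0 ≤ t) (x : EuclideanSpace 𝕜 n)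
    (hx : ∀ l, x l ≠ 0 → ‖d l‖ ≤ t) :
    ‖toEuclideanLin (diagonal d) x‖ ≤ t * ‖x‖ := by
  refine le_of_pow_le_pow_left₀ two_ne_zero (by positivity) ?_
  rw [mul_pow, EuclideanSpace.norm_sq_eq, EuclideanSpace.norm_sq_eq, Finset.mul_sum]
  refine Finset.sum_le_sum fun l _ => ?_
  rw [toLpLin_apply, PiLp.toLp_apply, mulVec_diagonal, norm_mul, mul_pow]
  by_cases h0 : x l = 0
  · simp [h0]
  · gcongr
    exact hx l h0

def EuclideanSpace.firstCoords {𝕜 : Type*} [RCLike 𝕜] {m r : ℕ} (h : m ≤ r) :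
    EuclideanSpace 𝕜 (Fin r) →ₗ[𝕜] (Fin m → 𝕜) :=
  LinearMap.funLeft 𝕜 𝕜 (Fin.castLE h) ∘ₗ (WithLp.linearEquiv 2 𝕜 (Fin r → 𝕜)).toLinearMap

theorem EuclideanSpace.apply_eq_zero_of_firstCoords_eq_zero {𝕜 : Type*} [RCLike 𝕜] {m r : ℕ}
    {h : m ≤ r} {x : EuclideanSpace 𝕜 (Fin r)} (hx : firstCoords h x = 0) {l : Fin r}
    (hl : l.val < m) : x l = 0 :=
  congr_fun hx ⟨l, hl⟩

theorem norm_toEuclideanLin_le_specNorm_mul {m n : ℕ} (M : Matrix (Fin m) (Fin n) ℂ)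
    (x : EuclideanSpace ℂ (Fin n)) : ‖toEuclideanLin M x‖ ≤ specNorm M * ‖x‖ :=
  (LinearMap.toContinuousLinearMap (toEuclideanLin M)).le_opNorm x

theorem sval_le_of_forall_mem_norm_le {n : ℕ} (M : Matrix (Fin n) (Fin n) ℂ) {c : ℝ}
    (hc : 0 ≤ c) (i : Fin n) (V : Submodule ℂ (EuclideanSpace ℂ (Fin n)))
    (hV : n ≤ Module.finrank ℂ V + i) (hMV : ∀ x ∈ V, ‖toEuclideanLin M x‖ ≤ c * ‖x‖) :
    sval M i ≤ c := by
  set hA := isHermitian_conjTranspose_mul_self M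
  have hcard : Module.finrank ℂ V ≤ Fintype.card {k // hA.eigenvalues k ≤ c ^ 2} := by
    refine hA.eigenvectorBasis.finrank_le_card_of_re_inner_le
      (isSymmetric_toEuclideanLin_iff.mpr hA) (fun k => ?_) fun x hx => ?_
    · rw [toLpLin_apply, hA.mulVec_eigenvectorBasis, RCLike.real_smul_eq_coe_smul (K := ℂ)]
      rfl
    · rw [re_inner_toEuclideanLin_conjTranspose_mul_self, ← mul_pow]
      exact pow_le_pow_left₀ (norm_nonneg _) (hMV x hx) 2
  have hsorted := Tuple.sort_apply_le_of_lt_card hA.eigenvalues (c := c ^ 2) i.rev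
    (show i.rev.val < _ by rw [Fin.val_rev]; omega)
  exact Real.sqrt_le_sqrt hsorted |>.trans_eq (Real.sqrt_sq hc)

theorem norm_toEuclideanLin_diagonal_sqrt_le {r : ℕ} {σ : Fin r → ℝ} (hσ : Antitone σ)
    (k : Fin r) (x : EuclideanSpace ℂ (Fin r)) (hx : ∀ l < k, x l = 0) :
    ‖toEuclideanLin (diagonal fun l => (√(σ l) : ℂ)) x‖ ≤ √(σ k) * ‖x‖ :=
  norm_toEuclideanLin_diagonal_le _ (Real.sqrt_nonneg _) x fun l hl => by
    rw [Complex.norm_real, Real.norm_of_nonneg (Real.sqrt_nonneg _)]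
    exact Real.sqrt_le_sqrt (hσ (le_of_not_gt fun hlk => hl (hx l hlk)))

theorem norm_toEuclideanLin_diagonal_sqrt_mul_mul_le {r : ℕ} {σ : Fin r → ℝ} (hσ : Antitone σ)
    {H : Matrix (Fin r) (Fin r) ℂ} (hH : specNorm H ≤ 1) {j k : Fin r}
    {x : EuclideanSpace ℂ (Fin r)} (hx : ∀ l < k, x l = 0)
    (hHDx : ∀ l < j, toEuclideanLin (H * diagonal fun l => (√(σ l) : ℂ)) x l = 0) :
    ‖toEuclideanLin ((diagonal fun l => (√(σ l) : ℂ)) * H * diagonal fun l => (√(σ l) : ℂ)) x‖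
      ≤ √(σ j * σ k) * ‖x‖ := by
  set D : Matrix (Fin r) (Fin r) ℂ := diagonal fun l => (√(σ l) : ℂ)
  have hHD : ‖toEuclideanLin (H * D) x‖ ≤ √(σ k) * ‖x‖ := calc
    ‖toEuclideanLin (H * D) x‖ = ‖toEuclideanLin H (toEuclideanLin D x)‖ := by
      rw [toLpLin_mul_same, LinearMap.comp_apply]
    _ ≤ ‖toEuclideanLin D x‖ := (norm_toEuclideanLin_le_specNorm_mul H _).trans
      (mul_le_of_le_one_left (norm_nonneg _) hH)
    _ ≤ √(σ k) * ‖x‖ := norm_toEuclideanLin_diagonal_sqrt_le hσ k x hx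
  calc ‖toEuclideanLin (D * H * D) x‖ = ‖toEuclideanLin D (toEuclideanLin (H * D) x)‖ := by
        rw [mul_assoc, toLpLin_mul_same, LinearMap.comp_apply]
    _ ≤ √(σ j) * ‖toEuclideanLin (H * D) x‖ := norm_toEuclideanLin_diagonal_sqrt_le hσ j _ hHDx
    _ ≤ √(σ j) * (√(σ k) * ‖x‖) := by gcongr
    _ ≤ √(σ j * σ k) * ‖x‖ := by
        rw [← mul_assoc]
        exact mul_le_mul_of_nonneg_right (Real.sqrt_mul_sqrt_le _ _) (norm_nonneg _)

theorem sval_DHD_le_pairMin_general {r : ℕ} (σ : Fin r → ℝ) (hσ : Antitone σ)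
    (H : Matrix (Fin r) (Fin r) ℂ)
    (hnorm : specNorm H ≤ 1) (i : Fin r) :
    sval (Matrix.diagonal (fun j => (Real.sqrt (σ j) : ℂ)) * H *
        Matrix.diagonal (fun j => (Real.sqrt (σ j) : ℂ))) i ≤ pairMin σ i := by
  refine Finset.le_inf' _ _ fun j hj => ?_
  set k := isub i j
  let f := EuclideanSpace.firstCoords (𝕜 := ℂ) k.isLt.le
  let g := EuclideanSpace.firstCoords (𝕜 := ℂ) j.isLt.le ∘ₗ
    toEuclideanLin (H * diagonal fun l => (√(σ l) : ℂ))
  have hdim : r ≤ Module.finrank ℂ ↥(LinearMap.ker f ⊓ LinearMap.ker g) + i := by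
    have hrank := Module.finrank_le_finrank_ker_inf_ker_add f g
    have hki : k.val + j.val = i.val := Nat.sub_add_cancel (Finset.mem_Iic.mp hj : j ≤ i)
    simp only [finrank_euclideanSpace_fin, Module.finrank_fin_fun] at hrank
    omega
  refine sval_le_of_forall_mem_norm_le _ (Real.sqrt_nonneg _) i _ hdim fun x hx => ?_
  obtain ⟨hfx, hgx⟩ := Submodule.mem_inf.mp hx
  simp only [f, g, LinearMap.mem_ker, LinearMap.comp_apply] at hfx hgx
  exact norm_toEuclideanLin_diagonal_sqrt_mul_mul_le hσ hnorm
    (fun l hl => EuclideanSpace.apply_eq_zero_of_firstCoords_eq_zero hfx hl)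
    (fun l hl => EuclideanSpace.apply_eq_zero_of_firstCoords_eq_zero hgx hl)

/-- For Hermitian `H` with spectral norm at most `1`,
`σ_i(DHD) ≤ min_{1 ≤ j ≤ i} √(σ_j σ_{i-j+1})`. -/
theorem sval_DHD_le_pairMin {r : ℕ} (σ : Fin r → ℝ) (hσ : Antitone σ)
    (hpos : ∀ j, 0 < σ j) (H : Matrix (Fin r) (Fin r) ℂ) (hH : H.IsHermitian)
    (hnorm : specNorm H ≤ 1) (i : Fin r) :
    sval (Matrix.diagonal (fun j => (Real.sqrt (σ j) : ℂ)) * H *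
        Matrix.diagonal (fun j => (Real.sqrt (σ j) : ℂ))) i ≤ pairMin σ i :=
  sval_DHD_le_pairMin_general σ hσ H hnorm i
end

section
/- Let σ₁ ≥ σ₂ ≥ … ≥ σ_r > 0 and let D = diag(√σ₁, …, √σ_r). For every i with 1 ≤ i ≤ r there exists an r×r Hermitian matrix H with ‖H‖₂ ≤ 1 such that σ_i(DHD) = min_{1 ≤ j ≤ i} √(σ_j σ_{i−j+1}). In fact, one may take H to be zero except that its leading i×i principal submatrix is the anti-diagonal matrix (ones on the antidiagonal, zeros elsewhere). -/
/-!
With `H` the anti-identity on the leading `(i+1) × (i+1)` block, `(DHD)ᴴ(DHD) = D H D² H D` is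
diagonal, with entries `σ_l σ_{i-l}` for `l ≤ i` and `0` beyond. So the squared singular values
of `DHD` are these `i + 1` positive numbers padded with zeros, and the `(i+1)`-th largest is the
smallest positive one. Also `‖H‖² = ‖HᴴH‖ = ‖H²‖ ≤ 1`, since `H²` is a coordinate projection.
-/

open Matrix Finset

section OrderStatistics

variable {α : Type*} [LinearOrder α] {n : ℕ}

theorem Monotone.le_apply_rev_iff {g : Fin n → α} (hg : Monotone g) (i : Fin n) (t : α) :
    t ≤ g i.rev ↔ i.val + 1 ≤ #{k | t ≤ g k} := by
  have hrev : i.rev.val = n - (i.val + 1) := Fin.val_rev i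
  constructor
  · intro ht
    calc i.val + 1 = #(Ici i.rev) := by rw [Fin.card_Ici]; omega
      _ ≤ #{k | t ≤ g k} := card_le_card fun k hk =>
          mem_filter.mpr ⟨mem_univ k, ht.trans (hg (mem_Ici.mp hk))⟩
  · intro hcard
    by_contra! hlt
    have hsub : ({k | t ≤ g k} : Finset (Fin n)) ⊆ Ioi i.rev := fun k hk =>
      mem_Ioi.mpr <| lt_of_not_ge fun hki => ((mem_filter.mp hk).2.trans (hg hki)).not_gt hlt
    have := card_le_card hsub
    rw [Fin.card_Ioi] at this
    omega

theorem card_filter_le_eq_of_map_eq {ι : Type*} [Fintype ι] {f e : ι → α}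
    (h : univ.val.map f = univ.val.map e) (t : α) : #{k | t ≤ f k} = #{k | t ≤ e k} := by
  have := congrArg (Multiset.countP (t ≤ ·)) h
  rw [Multiset.countP_map, Multiset.countP_map] at this
  simpa [Multiset.countP_eq_card_filter, Finset.card, Finset.filter] using this

theorem le_apply_sort_rev_iff (f : Fin n → α) (i : Fin n) (t : α) :
    t ≤ f (Tuple.sort f i.rev) ↔ i.val + 1 ≤ #{k | t ≤ f k} := by
  rw [← card_filter_le_eq_of_map_eq (f := f ∘ Tuple.sort f)
    (by rw [← Multiset.map_map, Multiset.map_univ_val_equiv]) t]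
  exact (Tuple.monotone_sort f).le_apply_rev_iff i t

theorem apply_sort_rev_eq_inf' {f e : Fin n → α} (hfe : univ.val.map f = univ.val.map e)
    {i : Fin n} (he : ∀ k, ¬k ≤ i → ∀ j ≤ i, e k < e j) :
    f (Tuple.sort f i.rev) = (Iic i).inf' nonempty_Iic e := by
  obtain ⟨j, hj, hjmin⟩ := exists_mem_eq_inf' nonempty_Iic e
  have hmin : ∀ k ≤ i, e j ≤ e k := fun k hk => hjmin ▸ inf'_le e (mem_Iic.mpr hk)
  rw [hjmin]
  apply le_antisymm
  · by_contra! hlt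
    have hcard := (le_apply_sort_rev_iff f i _).mp le_rfl
    rw [card_filter_le_eq_of_map_eq hfe] at hcard
    have hsub : ({k | f (Tuple.sort f i.rev) ≤ e k} : Finset (Fin n)) ⊆ (Iic i).erase j := by
      intro k hk
      have hk := (mem_filter.mp hk).2
      by_cases hki : k ≤ i
      · exact mem_erase.mpr ⟨by rintro rfl; exact not_le_of_gt hlt hk, mem_Iic.mpr hki⟩
      · exact absurd hk (not_le_of_gt ((he k hki j (mem_Iic.mp hj)).trans hlt))
    have := card_le_card hsub
    rw [card_erase_of_mem hj, Fin.card_Iic] at this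
    omega
  · rw [le_apply_sort_rev_iff, card_filter_le_eq_of_map_eq hfe]
    calc i.val + 1 = #(Iic i) := (Fin.card_Iic i).symm
      _ ≤ _ := card_le_card fun k hk => mem_filter.mpr ⟨mem_univ k, hmin k (mem_Iic.mp hk)⟩

end OrderStatistics

section Isub

variable {r : ℕ}

theorem val_add_val_eq_iff {i k l : Fin r} : k.val + l.val = i.val ↔ k ≤ i ∧ l = isub i k := by
  rw [Fin.ext_iff, Fin.le_def]; simp only [isub]; omega

theorem val_add_val_eq_iff' {i k l : Fin r} : k.val + l.val = i.val ↔ l ≤ i ∧ k = isub i l := by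
  rw [add_comm, val_add_val_eq_iff]

theorem isub_isub {i k : Fin r} (hk : k ≤ i) : isub i (isub i k) = k := by
  rw [Fin.ext_iff]; simp only [isub]; rw [Fin.le_def] at hk; omega

theorem isub_inj {i k l : Fin r} (hk : k ≤ i) (hl : l ≤ i) : isub i k = isub i l ↔ k = l :=
  ⟨fun h => by rw [← isub_isub hk, h, isub_isub hl], congrArg _⟩

end Isub

namespace Matrix

variable {r : ℕ}

def antidiagBlock (R : Type*) [Zero R] [One R] (i : Fin r) : Matrix (Fin r) (Fin r) R :=
  of fun k l => if k.val + l.val = i.val then 1 else 0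

section Semiring

variable {R : Type*} [Semiring R]

theorem antidiagBlock_mul_apply (i : Fin r) {n : Type*} (A : Matrix (Fin r) n R) (k : Fin r)
    (l : n) :
    (antidiagBlock R i * A) k l = if k ≤ i then A (isub i k) l else 0 := by
  simp [antidiagBlock, mul_apply, val_add_val_eq_iff, ite_and]

theorem mul_antidiagBlock_apply (i : Fin r) {n : Type*} (A : Matrix n (Fin r) R) (k : n)
    (l : Fin r) :
    (A * antidiagBlock R i) k l = if l ≤ i then A k (isub i l) else 0 := by
  simp [antidiagBlock, mul_apply, val_add_val_eq_iff', ite_and]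

theorem antidiagBlock_mul_diagonal_mul_antidiagBlock (i : Fin r) (d : Fin r → R) :
    antidiagBlock R i * diagonal d * antidiagBlock R i =
      diagonal fun l => if l ≤ i then d (isub i l) else 0 := by
  ext k l
  rw [Matrix.mul_assoc, antidiagBlock_mul_apply, mul_antidiagBlock_apply, diagonal_apply,
    diagonal_apply]
  by_cases hk : k ≤ i <;> by_cases hl : l ≤ i <;> by_cases hkl : k = l <;>
    simp_all [isub_inj]

theorem antidiagBlock_mul_self (i : Fin r) :
    antidiagBlock R i * antidiagBlock R i = diagonal fun l => if l ≤ i then 1 else 0 := by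
  simpa using antidiagBlock_mul_diagonal_mul_antidiagBlock (R := R) i 1

theorem isHermitian_antidiagBlock [StarRing R] (i : Fin r) :
    (antidiagBlock R i).IsHermitian := by
  ext k l
  simp only [conjTranspose_apply, antidiagBlock, of_apply, add_comm l.val]
  split_ifs <;> simp

end Semiring

open scoped Matrix.Norms.L2Operator in
theorem specNorm_antidiagBlock_le (i : Fin r) : specNorm (antidiagBlock ℂ i) ≤ 1 := by
  have h : ‖antidiagBlock ℂ i‖ * ‖antidiagBlock ℂ i‖ ≤ 1 := by
    rw [← l2_opNorm_conjTranspose_mul_self, (isHermitian_antidiagBlock i).eq,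
      antidiagBlock_mul_self, l2_opNorm_diagonal]
    exact (pi_norm_le_iff_of_nonneg zero_le_one).mpr fun l => by split_ifs <;> simp
  show ‖antidiagBlock ℂ i‖ ≤ 1
  nlinarith [norm_nonneg (antidiagBlock ℂ i)]

theorem conjTranspose_mul_self_diagonal_mul_antidiagBlock_mul_diagonal (i : Fin r)
    (a : Fin r → ℝ) :
    (diagonal (fun j => (a j : ℂ)) * antidiagBlock ℂ i * diagonal (fun j => (a j : ℂ)))ᴴ *
        (diagonal (fun j => (a j : ℂ)) * antidiagBlock ℂ i * diagonal (fun j => (a j : ℂ))) =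
      diagonal fun l => ((if l ≤ i then a l ^ 2 * a (isub i l) ^ 2 else 0 : ℝ) : ℂ) := by
  set D := diagonal (fun j => (a j : ℂ))
  have hD : Dᴴ = D := by simp [D, Pi.star_def]
  calc (D * antidiagBlock ℂ i * D)ᴴ * (D * antidiagBlock ℂ i * D)
      = D * (antidiagBlock ℂ i * (D * D) * antidiagBlock ℂ i) * D := by
        simp only [conjTranspose_mul, hD, (isHermitian_antidiagBlock i).eq, Matrix.mul_assoc]
    _ = _ := by
        simp only [D, diagonal_mul_diagonal, antidiagBlock_mul_diagonal_mul_antidiagBlock]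
        congr 1
        ext l
        split_ifs <;> push_cast <;> ring

theorem _root_.Matrix.IsHermitian.map_eigenvalues_eq_of_eq_diagonal {n : Type*} [Fintype n]
    [DecidableEq n] {A : Matrix n n ℂ} (hA : A.IsHermitian) {e : n → ℝ}
    (h : A = diagonal fun j => (e j : ℂ)) :
    univ.val.map hA.eigenvalues = univ.val.map e := by
  apply Multiset.map_injective Complex.ofReal_injective
  have hroots : A.charpoly.roots = univ.val.map fun j => (e j : ℂ) := by
    rw [h, charpoly_diagonal, Polynomial.roots_prod _ _ (prod_ne_zero_iff.mpr fun j _ =>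
      Polynomial.X_sub_C_ne_zero _)]
    simp
  rw [Multiset.map_map, Multiset.map_map]
  exact hA.roots_charpoly_eq_eigenvalues.symm.trans hroots

end Matrix

theorem sval_DHD_pairMin_attained_general {r : ℕ} (σ : Fin r → ℝ)
    (hpos : ∀ j, 0 < σ j) (i : Fin r) :
    ∃ H : Matrix (Fin r) (Fin r) ℂ, H.IsHermitian ∧ specNorm H ≤ 1 ∧
      H = Matrix.of (fun k l : Fin r => if k.val + l.val = i.val then (1 : ℂ) else 0) ∧
      sval (Matrix.diagonal (fun j => (Real.sqrt (σ j) : ℂ)) * H *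
        Matrix.diagonal (fun j => (Real.sqrt (σ j) : ℂ))) i = pairMin σ i := by
  set e : Fin r → ℝ := fun l => if l ≤ i then σ l * σ (isub i l) else 0
  have hMM := conjTranspose_mul_self_diagonal_mul_antidiagBlock_mul_diagonal i (Real.sqrt ∘ σ)
  simp only [Function.comp_apply, Real.sq_sqrt (hpos _).le] at hMM
  have he : ∀ k, ¬k ≤ i → ∀ j ≤ i, e k < e j := fun k hk j hj => by
    simpa only [e, if_neg hk, if_pos hj] using mul_pos (hpos j) (hpos _)
  refine ⟨antidiagBlock ℂ i, isHermitian_antidiagBlock i, specNorm_antidiagBlock_le i, rfl, ?_⟩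
  rw [sval, apply_sort_rev_eq_inf'
      ((isHermitian_conjTranspose_mul_self _).map_eigenvalues_eq_of_eq_diagonal hMM) he,
    apply_inf'_eq_inf'_comp _ _ fun x y => Real.sqrt_monotone.map_min, pairMin]
  exact inf'_congr _ rfl fun j hj => by simp [mem_Iic.mp hj]

/-- Attainability: the Hermitian matrix which is zero except for an anti-diagonal leading
`i × i` block has spectral norm at most `1` and attains `σ_i(DHD) = min_j √(σ_j σ_{i-j+1})`. -/
theorem sval_DHD_pairMin_attained {r : ℕ} (σ : Fin r → ℝ) (hσ : Antitone σ)
    (hpos : ∀ j, 0 < σ j) (i : Fin r) :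
    ∃ H : Matrix (Fin r) (Fin r) ℂ, H.IsHermitian ∧ specNorm H ≤ 1 ∧
      H = Matrix.of (fun k l : Fin r => if k.val + l.val = i.val then (1 : ℂ) else 0) ∧
      sval (Matrix.diagonal (fun j => (Real.sqrt (σ j) : ℂ)) * H *
        Matrix.diagonal (fun j => (Real.sqrt (σ j) : ℂ))) i = pairMin σ i :=
  sval_DHD_pairMin_attained_general σ hpos i
end

section
/- Let Σ = diag(σ₁, …, σ_r) with σ₁ ≥ … ≥ σ_r > 0. For every 1 ≤ i ≤ r there exists X ∈ ℂ^{r×r} with ‖X‖₂ ≤ 1 such that ΣX has at least i eigenvalues all of modulus exactly (∏_{j=1}^i σ_j)^{1/i}. -/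
open Matrix Finset

/-! Take `X` to be the permutation matrix of the cycle `(0 1 … i)`. If `μ ^ (i + 1) = σ₀ ⋯ σᵢ`,
the vector `v` with `v k = μ ^ k * σₖ ⋯ σᵢ₋₁` for `k ≤ i` and `v k = 0` beyond is an eigenvector
of `Σ X` for `μ`: the relation `σⱼ v (j + 1) = μ v j` runs along the cycle, and closing it at `i`
is exactly the equation for `μ`. The `i + 1` distinct roots `μ` all have modulus
`(σ₀ ⋯ σᵢ) ^ (1 / (i + 1))`, and a permutation matrix has spectral norm `1`. -/

open scoped Matrix.Norms.L2Operator

theorem specNorm_eq_l2_opNorm {m n : ℕ} (M : Matrix (Fin m) (Fin n) ℂ) : specNorm M = ‖M‖ := rfl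

theorem Matrix.isRoot_charpoly_of_mulVec_eq_smul {R n : Type*} [CommRing R] [IsDomain R]
    [Fintype n] [DecidableEq n] {A : Matrix n n R} {μ : R} {v : n → R} (hv : v ≠ 0)
    (hAv : A *ᵥ v = μ • v) : A.charpoly.IsRoot μ := by
  rw [← charpoly_toLin', ← Module.End.hasEigenvalue_iff_isRoot_charpoly]
  exact Module.End.hasEigenvalue_of_hasEigenvector ⟨Module.End.mem_eigenspace_iff.mpr hAv, hv⟩

theorem Polynomial.map_univ_le_roots {R ι : Type*} [CommRing R] [IsDomain R] [Fintype ι]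
    {p : Polynomial R} (hp : p ≠ 0) {e : ι → R} (he : Function.Injective e)
    (hroot : ∀ j, p.IsRoot (e j)) : univ.val.map e ≤ p.roots := by
  refine (Multiset.le_iff_subset (univ.nodup.map he)).mpr fun x hx => ?_
  obtain ⟨j, -, rfl⟩ := Multiset.mem_map.mp hx
  exact (mem_roots hp).mpr (hroot j)

theorem Complex.exists_injective_pow_eq_ofReal {n : ℕ} (hn : n ≠ 0) {c : ℝ} (hc : 0 < c) :
    ∃ e : Fin n → ℂ, Function.Injective e ∧ ∀ j, e j ^ n = c ∧ ‖e j‖ = c ^ (n⁻¹ : ℝ) := by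
  set g : ℝ := c ^ (n⁻¹ : ℝ)
  have hg : 0 < g := Real.rpow_pos_of_pos hc _
  have hgn : g ^ n = c := Real.rpow_inv_natCast_pow hc.le hn
  obtain ⟨ζ, hζ⟩ : ∃ ζ : ℂ, IsPrimitiveRoot ζ n := ⟨_, Complex.isPrimitiveRoot_exp n hn⟩
  have hζ_norm : ‖ζ‖ = 1 := hζ.norm'_eq_one hn
  refine ⟨fun j => g * ζ ^ (j : ℕ), fun a b hab => ?_, fun j => ⟨?_, ?_⟩⟩
  · exact Fin.ext (hζ.pow_inj a.isLt b.isLt (mul_left_cancel₀ (by exact_mod_cast hg.ne') hab))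
  · rw [mul_pow, ← pow_mul, mul_comm (j : ℕ), pow_mul, hζ.pow_eq_one, one_pow, mul_one,
      ← Complex.ofReal_pow, hgn]
  · rw [norm_mul, norm_pow, hζ_norm, one_pow, mul_one, Complex.norm_real, Real.norm_of_nonneg hg.le]

section CycleRange

variable {R : Type*} [CommRing R] {r : ℕ} (d : Fin r → R) (i : Fin r) (μ : R)

def cycleRangeEigenvector : Fin r → R :=
  fun k => if k ≤ i then μ ^ (k : ℕ) * ∏ l ∈ Ico k i, d l else 0

theorem diagonal_mul_permMatrix_cycleRange_mulVec (hμ : μ ^ (i.val + 1) = ∏ k ∈ Iic i, d k) :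
    (diagonal d * (Fin.cycleRange i).permMatrix R) *ᵥ cycleRangeEigenvector d i μ =
      μ • cycleRangeEigenvector d i μ := by
  have : NeZero r := ⟨i.pos.ne'⟩
  ext j
  rw [← mulVec_mulVec, mulVec_diagonal, permMatrix_mulVec, Function.comp_apply, Pi.smul_apply,
    smul_eq_mul]
  rcases lt_trichotomy j i with hji | rfl | hij
  · have hsucc : Ico j i = insert j (Ico (Fin.cycleRange i j) i) := by
      ext l
      simp only [mem_Ico, mem_insert, Fin.le_def, Fin.lt_def, Fin.ext_iff,
        Fin.coe_cycleRange_of_lt hji]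
      omega
    have hj : j ∉ Ico (Fin.cycleRange i j) i := by
      simp [Fin.le_def, Fin.coe_cycleRange_of_lt hji]
    have hle : Fin.cycleRange i j ≤ i := by
      simp only [Fin.le_def, Fin.coe_cycleRange_of_lt hji]; omega
    simp only [cycleRangeEigenvector, if_pos hji.le, if_pos hle, hsucc, prod_insert hj,
      Fin.coe_cycleRange_of_lt hji]
    ring
  · have hIio : Ico 0 j = Iio j := by ext l; simp only [mem_Ico, mem_Iio, Fin.zero_le, true_and]
    simp only [cycleRangeEigenvector, le_refl, if_true, Fin.cycleRange_self, Fin.zero_le, hIio,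
      Ico_self, prod_empty, Fin.val_zero, pow_zero, one_mul, mul_one]
    rw [← pow_succ', hμ, ← Iio_insert, prod_insert (by simp)]
  · simp [cycleRangeEigenvector, Fin.cycleRange_of_gt hij, hij.not_ge]

theorem isRoot_charpoly_diagonal_mul_permMatrix_cycleRange [IsDomain R] (hμ0 : μ ≠ 0)
    (hμ : μ ^ (i.val + 1) = ∏ k ∈ Iic i, d k) :
    (diagonal d * (Fin.cycleRange i).permMatrix R).charpoly.IsRoot μ := by
  refine isRoot_charpoly_of_mulVec_eq_smul (fun h => ?_)
    (diagonal_mul_permMatrix_cycleRange_mulVec d i μ hμ)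
  have hi := congrFun h i
  simp only [cycleRangeEigenvector, le_refl, if_true, Ico_self, prod_empty, mul_one,
    Pi.zero_apply] at hi
  exact pow_ne_zero _ hμ0 hi

end CycleRange

theorem exists_X_eigenvalues_abs_eq_general {r : ℕ} (σ : Fin r → ℝ)
    (hpos : ∀ j, 0 < σ j) (i : Fin r) :
    ∃ X : Matrix (Fin r) (Fin r) ℂ, specNorm X ≤ 1 ∧
      ∃ e : Fin (i.val + 1) → ℂ,
        Finset.univ.val.map e ≤ (Matrix.diagonal (fun j => (σ j : ℂ)) * X).charpoly.roots ∧
        ∀ j, ‖e j‖ = (∏ k ∈ Finset.Iic i, σ k) ^ ((i.val + 1 : ℝ)⁻¹) := by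
  have hc : 0 < ∏ k ∈ Iic i, σ k := prod_pos fun k _ => hpos k
  obtain ⟨e, he_inj, he⟩ := Complex.exists_injective_pow_eq_ofReal i.val.succ_ne_zero hc
  refine ⟨(Fin.cycleRange i).permMatrix ℂ, (specNorm_eq_l2_opNorm _).trans_le
    (permMatrix_l2_opNorm_le _), e, ?_, fun j => by simpa using (he j).2⟩
  refine Polynomial.map_univ_le_roots (charpoly_monic _).ne_zero he_inj fun j => ?_
  have he0 : e j ≠ 0 := by
    rw [← norm_ne_zero_iff, (he j).2]
    exact (Real.rpow_pos_of_pos hc _).ne'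
  refine isRoot_charpoly_diagonal_mul_permMatrix_cycleRange _ i _ he0 ?_
  rw [(he j).1, Complex.ofReal_prod]

/-- Attainability half of Sun's theorem: there is `X` with `‖X‖₂ ≤ 1` such that `Σ X` has
at least `i` eigenvalues (with multiplicity) of modulus exactly `(σ₁⋯σ_i)^{1/i}`. -/
theorem exists_X_eigenvalues_abs_eq {r : ℕ} (σ : Fin r → ℝ) (hσ : Antitone σ)
    (hpos : ∀ j, 0 < σ j) (i : Fin r) :
    ∃ X : Matrix (Fin r) (Fin r) ℂ, specNorm X ≤ 1 ∧
      ∃ e : Fin (i.val + 1) → ℂ,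
        Finset.univ.val.map e ≤ (Matrix.diagonal (fun j => (σ j : ℂ)) * X).charpoly.roots ∧
        ∀ j, ‖e j‖ = (∏ k ∈ Finset.Iic i, σ k) ^ ((i.val + 1 : ℝ)⁻¹) :=
  exists_X_eigenvalues_abs_eq_general σ hpos i
end

section
/- Let B be an n×n Hermitian positive definite matrix, X₁ ∈ ℂ^{n×r} with X₁ᴴBX₁ = I_r, and let σ₁ ≥ … ≥ σ_r > 0 be the eigenvalues of X₁ᴴX₁. Then σ₁/σ_r ≤ κ₂(B), where κ₂(B) = λ_max(B)/λ_min(B) is the spectral condition number of B. Consequently the ratio of the largest to smallest condition number of a multiple eigenvalue of the definite pair (A,B) is bounded by κ₂(B). -/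
/-!
In the Loewner order `λ_min(B) • 1 ≤ B ≤ λ_max(B) • 1`. Conjugating by `X₁` and using
`X₁ᴴ B X₁ = 1` gives `λ_min(B) • X₁ᴴX₁ ≤ 1 ≤ λ_max(B) • X₁ᴴX₁`, so every eigenvalue of `X₁ᴴX₁`
lies in `[λ_max(B)⁻¹, λ_min(B)⁻¹]`, and the ratio of the extreme ones is at most `κ₂(B)`.
-/

open Matrix Finset
open scoped ComplexOrder

open scoped MatrixOrder

namespace Matrix

variable {𝕜 m n : Type*} [RCLike 𝕜] [Fintype n] [DecidableEq n]

lemma IsHermitian.smul_one_le_iff {A : Matrix n n 𝕜} (hA : A.IsHermitian) {c : ℝ} :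
    c • (1 : Matrix n n 𝕜) ≤ A ↔ ∀ i, c ≤ hA.eigenvalues i := by
  rw [← Algebra.algebraMap_eq_smul_one, algebraMap_le_iff_le_spectrum hA.isSelfAdjoint,
    hA.spectrum_real_eq_range_eigenvalues, Set.forall_mem_range]

lemma IsHermitian.le_smul_one_iff {A : Matrix n n 𝕜} (hA : A.IsHermitian) {c : ℝ} :
    A ≤ c • (1 : Matrix n n 𝕜) ↔ ∀ i, hA.eigenvalues i ≤ c := by
  rw [← Algebra.algebraMap_eq_smul_one, le_algebraMap_iff_spectrum_le hA.isSelfAdjoint,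
    hA.spectrum_real_eq_range_eigenvalues, Set.forall_mem_range]

lemma IsHermitian.iInf_eigenvalues_smul_one_le {A : Matrix n n 𝕜} (hA : A.IsHermitian) :
    (⨅ i, hA.eigenvalues i) • (1 : Matrix n n 𝕜) ≤ A :=
  hA.smul_one_le_iff.mpr fun i ↦ ciInf_le (Set.finite_range _).bddBelow i

lemma IsHermitian.le_iSup_eigenvalues_smul_one {A : Matrix n n 𝕜} (hA : A.IsHermitian) :
    A ≤ (⨆ i, hA.eigenvalues i) • (1 : Matrix n n 𝕜) :=
  hA.le_smul_one_iff.mpr fun i ↦ le_ciSup (Set.finite_range _).bddAbove i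

omit [DecidableEq n] in
lemma conjTranspose_mul_mul_le_conjTranspose_mul_mul [Finite m] {A B : Matrix n n 𝕜}
    (h : A ≤ B) (X : Matrix n m 𝕜) : Xᴴ * A * X ≤ Xᴴ * B * X := by
  rw [le_iff, ← Matrix.sub_mul, ← Matrix.mul_sub]
  exact (le_iff.mp h).conjTranspose_mul_mul_same X

variable [Fintype m] [DecidableEq m] {B : Matrix n n 𝕜} {X : Matrix n m 𝕜}

lemma eigenvalues_conjTranspose_mul_self_le_inv (hX : Xᴴ * B * X = 1) {c : ℝ} (hc : 0 < c)
    (hB : c • 1 ≤ B) (i : m) : (isHermitian_conjTranspose_mul_self X).eigenvalues i ≤ c⁻¹ := by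
  have h : c • (Xᴴ * X) ≤ 1 := by
    simpa [hX] using conjTranspose_mul_mul_le_conjTranspose_mul_mul hB X
  refine (isHermitian_conjTranspose_mul_self X).le_smul_one_iff.mp ?_ i
  simpa [smul_smul, hc.ne'] using smul_le_smul_of_nonneg_left h (inv_nonneg.mpr hc.le)

lemma inv_le_eigenvalues_conjTranspose_mul_self (hX : Xᴴ * B * X = 1) {c : ℝ} (hc : 0 < c)
    (hB : B ≤ c • 1) (i : m) : c⁻¹ ≤ (isHermitian_conjTranspose_mul_self X).eigenvalues i := by
  have h : 1 ≤ c • (Xᴴ * X) := by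
    simpa [hX] using conjTranspose_mul_mul_le_conjTranspose_mul_mul hB X
  refine (isHermitian_conjTranspose_mul_self X).smul_one_le_iff.mp ?_ i
  simpa [smul_smul, hc.ne'] using smul_le_smul_of_nonneg_left h (inv_nonneg.mpr hc.le)

end Matrix

/-- The ratio of the largest to smallest eigenvalue of `X₁ᴴ X₁` (the columns of `X₁` being
`B`-orthonormal) is bounded by the spectral condition number `κ₂(B) = λ_max(B)/λ_min(B)`. -/
theorem eigenvalue_ratio_le_condB {n r : ℕ} (hr : 0 < r)
    (B : Matrix (Fin n) (Fin n) ℂ) (hB : B.PosDef)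
    (X₁ : Matrix (Fin n) (Fin r) ℂ) (hX : X₁ᴴ * B * X₁ = 1) :
    (⨆ i, (Matrix.isHermitian_conjTranspose_mul_self X₁).eigenvalues i) /
        (⨅ i, (Matrix.isHermitian_conjTranspose_mul_self X₁).eigenvalues i) ≤
      (⨆ j, hB.isHermitian.eigenvalues j) / (⨅ j, hB.isHermitian.eigenvalues j) := by
  have : Nonempty (Fin r) := ⟨⟨0, hr⟩⟩
  have : Nonempty (Fin n) := by
    by_contra hn
    rw [not_nonempty_iff] at hn
    simpa [Matrix.mul_apply] using congr_fun₂ hX ⟨0, hr⟩ ⟨0, hr⟩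
  set lmin := ⨅ j, hB.isHermitian.eigenvalues j
  set lmax := ⨆ j, hB.isHermitian.eigenvalues j
  have hlmin : 0 < lmin := by
    obtain ⟨j, hj⟩ := exists_eq_ciInf_of_finite (f := hB.isHermitian.eigenvalues)
    exact (hB.eigenvalues_pos j).trans_eq hj
  have hlmax : 0 < lmax := hlmin.trans_le <|
    ciInf_le_ciSup (Set.finite_range _).bddBelow (Set.finite_range _).bddAbove
  have hσ_le := eigenvalues_conjTranspose_mul_self_le_inv hX hlmin
    hB.isHermitian.iInf_eigenvalues_smul_one_le
  have hle_σ := inv_le_eigenvalues_conjTranspose_mul_self hX hlmax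
    hB.isHermitian.le_iSup_eigenvalues_smul_one
  calc _ ≤ lmin⁻¹ / lmax⁻¹ :=
        div_le_div₀ (by positivity) (ciSup_le hσ_le) (by positivity) (le_ciInf hle_σ)
    _ = lmax / lmin := inv_div_inv lmin lmax
end
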